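/- For all integers n ≥ k ≥ 1, u_r(n,k) = Σ_{l=k}^{n} (-1)^{n-l} · u_r(l-1,k-1) · Π_{i=l}^{n-1} (i²+r). -/

import Mathlib

/-!
For fixed `k`, the sequence `n ↦ u_r(n, k)` satisfies the first-order linear recurrence
`a (n + 1) = b n - c n * a n` with `b n = u_r(n, k - 1)` and `c n = n² + r`, and it starts at
`u_r(k - 1, k) = 0`. Unrolling such a recurrence expresses `a n` as the sum of the inputs `b (l - 1)`,
each multiplied by `-c` for every later step.
-/

/-- `centralu r n k` is the r-central factorial number with even indices of the first kind. -/
def centralu (r : ℕ) : ℕ → ℕ → ℤ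
  | 0, 0 => 1
  | 0, _ + 1 => 0
  | n + 1, 0 => (-1) ^ (n + 1) * ∏ i ∈ Finset.range (n + 1), ((i : ℤ) ^ 2 + r)
  | n + 1, k + 1 => centralu r n k - ((n : ℤ) ^ 2 + r) * centralu r n (k + 1)

open Finset

theorem eq_sum_of_linear_recurrence {R : Type*} [CommRing R] (a b c : ℕ → R)
    (hrec : ∀ l, a (l + 1) = b l - c l * a l) {m n : ℕ} (hmn : m ≤ n) :
    a n = (-1) ^ (n - m) * a m * ∏ i ∈ Ico m n, c i +
      ∑ l ∈ Ioc m n, (-1) ^ (n - l) * b (l - 1) * ∏ i ∈ Ico l n, c i := by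
  induction n, hmn using Nat.le_induction with
  | base => simp
  | succ n hmn ih =>
    have hsum : ∑ l ∈ Ioc m n, (-1) ^ (n + 1 - l) * b (l - 1) * ∏ i ∈ Ico l (n + 1), c i =
        -c n * ∑ l ∈ Ioc m n, (-1) ^ (n - l) * b (l - 1) * ∏ i ∈ Ico l n, c i := by
      rw [mul_sum]
      refine sum_congr rfl fun l hl => ?_
      obtain ⟨-, hln⟩ := mem_Ioc.mp hl
      rw [prod_Ico_succ_top hln, Nat.sub_add_comm hln, pow_succ]
      ring
    rw [sum_Ioc_succ_top (by omega), hsum, prod_Ico_succ_top hmn, Nat.sub_add_comm hmn, pow_succ,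
      hrec, ih]
    simp only [Nat.sub_self, pow_zero, Nat.add_sub_cancel, Ico_self, prod_empty]
    ring

theorem centralu_eq_zero_of_lt (r : ℕ) {n k : ℕ} (h : n < k) : centralu r n k = 0 := by
  induction n generalizing k with
  | zero =>
    obtain ⟨k, rfl⟩ := Nat.exists_eq_add_one_of_ne_zero h.ne'
    rfl
  | succ n ih =>
    obtain ⟨k, rfl⟩ := Nat.exists_eq_add_one_of_ne_zero (Nat.ne_zero_of_lt h)
    simp only [centralu, ih (by omega : n < k), ih (by omega : n < k + 1), mul_zero, sub_zero]

theorem centralu_recurrence_sum (r n k : ℕ) (hk : 1 ≤ k) (h : k ≤ n) :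
    centralu r n k =
      ∑ l ∈ Finset.Icc k n,
        (-1) ^ (n - l) * centralu r (l - 1) (k - 1) *
          ∏ i ∈ Finset.Ico l n, ((i : ℤ) ^ 2 + r) := by
  obtain ⟨j, rfl⟩ := Nat.exists_eq_add_one_of_ne_zero (Nat.one_le_iff_ne_zero.mp hk)
  have hrec (l : ℕ) : centralu r (l + 1) (j + 1) =
      centralu r l j - ((l : ℤ) ^ 2 + r) * centralu r l (j + 1) := rfl
  rw [eq_sum_of_linear_recurrence (fun n => centralu r n (j + 1)) (fun n => centralu r n j)
    (fun n => (n : ℤ) ^ 2 + r) hrec (by omega : j ≤ n)]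
  simp [centralu_eq_zero_of_lt r (Nat.lt_succ_self j), Icc_add_one_left_eq_Ioc]
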